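/- arXiv:1705.08832 — 3 statements merged into one kernel-verified Lean document; each statement's English description precedes it below -/
import Mathlib

section
/- For every real t ≥ 1, define H(t) = -(1/t)·log(1/t) - (1-1/t)·log(1-1/t) (with H(1) = 0). Then for any real σ > 0 and any natural number m, the number of sequences (k₀, ..., k_m) of positive integers with k₀ + ... + k_m ≤ (m+1)·σ is at most exp((m+1)·σ·H(max σ 1)). -/
/-- The binary-entropy-type function `H(t) = -(1/t)·log(1/t) - (1-1/t)·log(1-1/t)`
(with the convention `Real.log 0 = 0`, so that `H 1 = 0`). -/
noncomputable def Hent (t : ℝ) : ℝ :=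
  -(1 / t) * Real.log (1 / t) - (1 - 1 / t) * Real.log (1 - 1 / t)

/-!
The partial sums `k₀, k₀ + k₁, …` of a sequence of `n = m + 1` positive integers with sum at most
`N = ⌊nσ⌋` form an `n`-element subset of `{1, …, N}` that determines the sequence, so there are at
most `C(N, n)` such sequences. For `σ ≤ 1` this is at most `1`. For `σ > 1` put `p = 1/σ`: the term
`C(N, n) pⁿ (1 - p)^(N - n)` of the binomial expansion of `(p + (1 - p))^N` is at most `1`, and since
`H(σ)` is the binary entropy of `p`, taking logarithms gives `C(N, n) ≤ exp(nσ H(σ))`.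
-/

open Finset Real

namespace Fin

variable {M : Type*} {n : ℕ}

theorem partialSum_last [AddCommMonoid M] (f : Fin n → M) :
    partialSum f (last n) = ∑ i, f i := by
  simp [partialSum, List.take_of_length_le, List.sum_ofFn]

theorem partialSum_injective [AddMonoid M] [IsLeftCancelAdd M] :
    Function.Injective (partialSum : (Fin n → M) → Fin (n + 1) → M) := by
  intro f g h
  funext i
  have hi := congrFun h i.succ
  rw [partialSum_succ, partialSum_succ, congrFun h i.castSucc] at hi
  exact add_left_cancel hi

theorem partialSum_strictMono [AddMonoid M] [Preorder M] [AddLeftStrictMono M] {f : Fin n → M}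
    (hf : ∀ i, 0 < f i) : StrictMono (partialSum f) :=
  strictMono_iff_lt_succ.2 fun i => by rw [partialSum_succ]; exact lt_add_of_pos_right _ (hf i)

end Fin

theorem ncard_pos_tuples_sum_le_le_choose (n N : ℕ) :
    {k : Fin n → ℕ | (∀ i, 1 ≤ k i) ∧ ∑ i, k i ≤ N}.ncard ≤ N.choose n := by
  classical
  have key := Set.ncard_le_ncard_of_injOn (s := {k : Fin n → ℕ | (∀ i, 1 ≤ k i) ∧ ∑ i, k i ≤ N})
    (fun k => univ.image (Fin.partialSum k ∘ Fin.succ))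
    (t := (powersetCard n (Icc 1 N) : Set (Finset ℕ))) ?_ ?_ (finite_toSet _)
  · simpa using key
  · rintro k ⟨hk, hkN⟩
    replace hk : ∀ i, 0 < k i := hk
    have hmono := (Fin.partialSum_strictMono hk).comp (Fin.strictMono_succ (n := n))
    refine mem_powersetCard.2 ⟨fun a ha => ?_, ?_⟩
    · obtain ⟨j, -, rfl⟩ := mem_image.1 ha
      have hlow : k j ≤ Fin.partialSum k j.succ := by rw [Fin.partialSum_succ]; exact le_add_self
      have hhigh : Fin.partialSum k j.succ ≤ Fin.partialSum k (Fin.last n) :=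
        (Fin.partialSum_strictMono hk).monotone (Fin.le_last _)
      rw [Fin.partialSum_last] at hhigh
      exact mem_Icc.2 ⟨(hk j).trans_le hlow, hhigh.trans hkN⟩
    · rw [card_image_of_injective _ hmono.injective, card_univ, Fintype.card_fin]
  · rintro k ⟨hk, -⟩ k' ⟨hk', -⟩ himg
    replace hk : ∀ i, 0 < k i := hk
    replace hk' : ∀ i, 0 < k' i := hk'
    have hrange := congrArg ((↑) : Finset ℕ → Set ℕ) himg
    simp only [coe_image, coe_univ, Set.image_univ] at hrange
    have hsucc := ((Fin.partialSum_strictMono hk).comp Fin.strictMono_succ).range_inj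
      ((Fin.partialSum_strictMono hk').comp Fin.strictMono_succ) |>.1 hrange
    refine Fin.partialSum_injective (funext fun i => Fin.cases ?_ (congrFun hsucc) i)
    simp

theorem choose_mul_pow_mul_pow_le_add_pow {R : Type*} [CommSemiring R] [PartialOrder R]
    [IsOrderedRing R] {a b : R} (ha : 0 ≤ a) (hb : 0 ≤ b) (N n : ℕ) :
    N.choose n * a ^ n * b ^ (N - n) ≤ (a + b) ^ N := by
  rcases lt_or_ge N n with hNn | hnN
  · simp [Nat.choose_eq_zero_of_lt hNn, add_nonneg ha hb]
  rw [add_pow]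
  calc (N.choose n : R) * a ^ n * b ^ (N - n) = a ^ n * b ^ (N - n) * N.choose n := by ring
    _ ≤ _ := single_le_sum (f := fun i => a ^ i * b ^ (N - i) * (N.choose i : R))
        (fun i _ => by positivity) (mem_range.2 (Nat.lt_succ_of_le hnN))

theorem Hent_eq_binEntropy (t : ℝ) : Hent t = binEntropy t⁻¹ := by
  simp only [Hent, binEntropy, one_div, log_inv]
  ring

theorem choose_le_exp_mul_binEntropy {N n : ℕ} {x : ℝ} (hn : 0 < n) (hN : (N : ℝ) ≤ x)
    (hnx : (n : ℝ) < x) : (N.choose n : ℝ) ≤ exp (x * binEntropy (n / x)) := by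
  rcases lt_or_ge N n with hNn | hnN
  · simp [Nat.choose_eq_zero_of_lt hNn, (exp_pos _).le]
  have hx : 0 < x := lt_of_le_of_lt n.cast_nonneg hnx
  set p : ℝ := n / x
  have hp0 : 0 < p := by positivity
  have hp1 : p < 1 := (div_lt_one hx).2 hnx
  have hC : 0 < (N.choose n : ℝ) := by exact_mod_cast Nat.choose_pos hnN
  have hbin : log (N.choose n) + n * log p + ((N - n : ℕ) : ℝ) * log (1 - p) ≤ 0 := by
    have := choose_mul_pow_mul_pow_le_add_pow hp0.le (sub_nonneg.2 hp1.le) N n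
    rw [add_sub_cancel, one_pow] at this
    have hq : 0 < 1 - p := sub_pos.2 hp1
    rw [← log_pow, ← log_pow, ← log_mul hC.ne' (pow_pos hp0 n).ne',
      ← log_mul (by positivity) (pow_pos hq _).ne']
    exact log_nonpos (by positivity) this
  have hxH : x * binEntropy p = -(n * log p) - (x - n) * log (1 - p) := by
    have hxp : x * p = n := mul_div_cancel₀ _ hx.ne'
    simp only [binEntropy, log_inv]
    rw [← hxp]
    ring
  have htail : (x - n) * log (1 - p) ≤ ((N - n : ℕ) : ℝ) * log (1 - p) :=
    mul_le_mul_of_nonpos_right (by push_cast [hnN]; linarith)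
      (log_nonpos (by linarith) (by linarith))
  rw [← exp_log hC, hxH]
  exact exp_le_exp.2 (by linarith)

/-- For any real `σ > 0` and any natural number `m`, the number of sequences
`(k₀, ..., k_m)` of positive integers with `k₀ + ... + k_m ≤ (m+1)·σ` is at most
`exp((m+1)·σ·H(max σ 1))`. -/
theorem count_sequences_le_exp_entropy (σ : ℝ) (hσ : 0 < σ) (m : ℕ) :
    (Set.ncard {k : Fin (m + 1) → ℕ |
        (∀ i, 1 ≤ k i) ∧ (∑ i, (k i : ℝ)) ≤ (m + 1) * σ} : ℝ)
      ≤ Real.exp ((m + 1) * σ * Hent (max σ 1)) := by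
  set N := ⌊(m + 1 : ℝ) * σ⌋₊
  have hx : 0 ≤ (m + 1 : ℝ) * σ := by positivity
  have hset : {k : Fin (m + 1) → ℕ | (∀ i, 1 ≤ k i) ∧ (∑ i, (k i : ℝ)) ≤ (m + 1) * σ}
      = {k | (∀ i, 1 ≤ k i) ∧ ∑ i, k i ≤ N} := by
    ext k
    simp only [Set.mem_ofPred_eq, N, Nat.le_floor_iff hx]
    push_cast
    rfl
  rw [hset]
  refine (Nat.cast_le.2 (ncard_pos_tuples_sum_le_le_choose _ N)).trans ?_
  rcases le_or_gt σ 1 with hσ1 | hσ1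
  · have hN : N ≤ m + 1 := Nat.floor_le_of_le <| by
      push_cast
      exact mul_le_of_le_one_right (by positivity) hσ1
    rw [max_eq_right hσ1, Hent_eq_binEntropy, inv_one, binEntropy_one, mul_zero, exp_zero]
    rcases hN.lt_or_eq with hN | hN
    · simp [Nat.choose_eq_zero_of_lt hN]
    · simp [hN]
  · have hdiv : ((m + 1 : ℕ) : ℝ) / ((m + 1) * σ) = σ⁻¹ := by
      push_cast
      exact div_mul_cancel_left₀ (by positivity) σ
    rw [max_eq_left hσ1.le, Hent_eq_binEntropy, ← hdiv]
    refine choose_le_exp_mul_binEntropy m.succ_pos (Nat.floor_le hx) ?_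
    push_cast
    exact lt_mul_of_one_lt_right (by positivity) hσ1
end

section
/- Let P, Q ∈ ℝ[X₁,...,X_n][X] be polynomials whose total degrees, viewed as polynomials in the n+1 variables X₁,...,X_n,X, are p and q respectively. Then the total degree of Res_X(P,Q) ∈ ℝ[X₁,...,X_n] is at most p·q. -/
open Polynomial

/-- The Sylvester matrix of two polynomials `P`, `Q` over a commutative ring, a square
matrix of size `deg P + deg Q`: the first `deg Q` rows are shifts of the coefficients of
`P`, the remaining `deg P` rows are shifts of the coefficients of `Q`. -/
noncomputable def sylvesterMatrix {A : Type*} [CommRing A] (P Q : Polynomial A) :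
    Matrix (Fin (P.natDegree + Q.natDegree)) (Fin (P.natDegree + Q.natDegree)) A :=
  Matrix.of fun i j =>
    if (i : ℕ) < Q.natDegree then
      (if (i : ℕ) ≤ (j : ℕ) ∧ (j : ℕ) ≤ (i : ℕ) + P.natDegree
        then P.coeff ((j : ℕ) - (i : ℕ)) else 0)
    else
      (if (i : ℕ) - Q.natDegree ≤ (j : ℕ) ∧ (j : ℕ) ≤ ((i : ℕ) - Q.natDegree) + Q.natDegree
        then Q.coeff ((j : ℕ) - ((i : ℕ) - Q.natDegree)) else 0)

/-- The resultant `Res_X(P,Q)`: the determinant of the Sylvester matrix. -/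
noncomputable def resultant {A : Type*} [CommRing A] (P Q : Polynomial A) : A :=
  (sylvesterMatrix P Q).det

/-- The total degree of `P ∈ ℝ[X₁,...,X_n][X]`, viewed as a polynomial in the `n+1`
variables `X₁,...,X_n,X`. -/
noncomputable def totalDeg {n : ℕ} (P : Polynomial (MvPolynomial (Fin n) ℝ)) : ℕ :=
  P.support.sup fun i => i + (P.coeff i).totalDegree

/-!
Give row `r` of the Sylvester matrix the weight `p` if it is a `P`-row and `q - deg Q` if it is
a `Q`-row. Then every nonzero entry satisfies `deg S r c + c ≤ weight r + r`, since the entry is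
the coefficient of `X^(c - r)` in `P`, resp. `X^(c - r + deg Q)` in `Q`. Along each permutation
in the Leibniz expansion the shifts `c` and `r` cancel, so
`deg Res ≤ deg Q · p + deg P · (q - deg Q)`, which is at most `p · q` because `deg P ≤ p`.
-/

lemma add_totalDegree_coeff_le_totalDeg {n : ℕ} (P : Polynomial (MvPolynomial (Fin n) ℝ))
    {k : ℕ} (h : P.coeff k ≠ 0) : k + (P.coeff k).totalDegree ≤ totalDeg P :=
  Finset.le_sup (f := fun i => i + (P.coeff i).totalDegree) (mem_support_iff.mpr h)

lemma natDegree_le_totalDeg {n : ℕ} (P : Polynomial (MvPolynomial (Fin n) ℝ)) :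
    P.natDegree ≤ totalDeg P := by
  rcases eq_or_ne P 0 with rfl | hP
  · simp
  · exact (Nat.le_add_right _ _).trans
      (add_totalDegree_coeff_le_totalDeg P (leadingCoeff_ne_zero.mpr hP))

theorem MvPolynomial.totalDegree_det_le {R σ ι : Type*} [CommRing R] [Fintype ι]
    [DecidableEq ι] (M : Matrix ι ι (MvPolynomial σ R)) (w b : ι → ℕ)
    (hM : ∀ i j, M i j ≠ 0 → (M i j).totalDegree + b j ≤ w i + b i) :
    M.det.totalDegree ≤ ∑ i, w i := by
  rw [Matrix.det_apply]
  refine (totalDegree_finsetSum _ _).trans (Finset.sup_le fun τ _ => ?_)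
  refine (totalDegree_smul_le _ _).trans ?_
  by_cases hτ : ∃ j, M (τ j) j = 0
  · obtain ⟨j, hj⟩ := hτ
    rw [Finset.prod_eq_zero (f := fun i => M (τ i) i) (Finset.mem_univ j) hj, totalDegree_zero]
    exact Nat.zero_le _
  push Not at hτ
  have hsum : ∑ j, (M (τ j) j).totalDegree + ∑ j, b j ≤ ∑ i, w i + ∑ i, b i :=
    calc ∑ j, (M (τ j) j).totalDegree + ∑ j, b j
        = ∑ j, ((M (τ j) j).totalDegree + b j) := Finset.sum_add_distrib.symm
      _ ≤ ∑ j, (w (τ j) + b (τ j)) := Finset.sum_le_sum fun j _ => hM _ _ (hτ j)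
      _ = ∑ i, w i + ∑ i, b i := by
        rw [Equiv.sum_comp τ (fun i => w i + b i), Finset.sum_add_distrib]
  exact (totalDegree_finsetProd _ _).trans (by omega)

lemma totalDegree_sylvesterMatrix_add_le {n : ℕ} (P Q : Polynomial (MvPolynomial (Fin n) ℝ))
    (r c : Fin (P.natDegree + Q.natDegree)) (h : sylvesterMatrix P Q r c ≠ 0) :
    (sylvesterMatrix P Q r c).totalDegree + c ≤
      (if (r : ℕ) < Q.natDegree then totalDeg P else totalDeg Q - Q.natDegree) + r := by
  have hQ := natDegree_le_totalDeg Q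
  simp only [sylvesterMatrix, Matrix.of_apply] at h ⊢
  split_ifs at h ⊢ with hr hc hc
  · have := add_totalDegree_coeff_le_totalDeg P h
    omega
  · exact (h rfl).elim
  · have := add_totalDegree_coeff_le_totalDeg Q h
    omega
  · exact (h rfl).elim

lemma sum_fin_add_ite_lt (a b x y : ℕ) :
    ∑ r : Fin (a + b), (if (r : ℕ) < b then x else y) = b * x + a * y := by
  rw [Fin.sum_univ_eq_sum_range (fun r => if r < b then x else y), add_comm,
    Finset.sum_range_add]
  simp [Finset.sum_ite_of_true]

/-- If `P, Q ∈ ℝ[X₁,...,X_n][X]` have total degrees `p` and `q` in the `n+1` variables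
`X₁,...,X_n,X`, then the total degree of `Res_X(P,Q) ∈ ℝ[X₁,...,X_n]` is at most `p·q`. -/
theorem totalDegree_resultant_le {n : ℕ} (P Q : Polynomial (MvPolynomial (Fin n) ℝ))
    (p q : ℕ) (hp : totalDeg P = p) (hq : totalDeg Q = q) :
    (_root_.resultant P Q).totalDegree ≤ p * q := by
  subst hp hq
  have hP := natDegree_le_totalDeg P
  have hQ := natDegree_le_totalDeg Q
  calc (_root_.resultant P Q).totalDegree
      ≤ ∑ r : Fin (P.natDegree + Q.natDegree),
          (if (r : ℕ) < Q.natDegree then totalDeg P else totalDeg Q - Q.natDegree) :=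
        MvPolynomial.totalDegree_det_le _ _ _ (totalDegree_sylvesterMatrix_add_le P Q)
    _ = Q.natDegree * totalDeg P + P.natDegree * (totalDeg Q - Q.natDegree) :=
        sum_fin_add_ite_lt _ _ _ _
    _ ≤ Q.natDegree * totalDeg P + totalDeg P * (totalDeg Q - Q.natDegree) := by gcongr
    _ = totalDeg P * totalDeg Q := by
        rw [mul_comm, ← mul_add, Nat.add_sub_cancel' hQ]
end

section
/- Let E be a two-dimensional real inner product space and let C_u, C_s be two cones in E (sets of the form {αv + βw : αβ ≥ 0} for noncollinear v, w) that are α-transverse for some α > 0, meaning that for all nonzero u ∈ C_u and u' ∈ C_s the unsigned angle between u and u' lies in (α, π−α). Then there exists K₀(α) such that for K > K₀(α), if x_u, w_u ∈ C_u and x_s, w_s ∈ C_s satisfy x_u + x_s = w_u + w_s, ‖w_u‖ ≥ K‖x_u‖ and ‖w_s‖ ≤ K^{-1}‖x_s‖, then x_u = 0 and x_s = 0. -/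
open InnerProductGeometry
open RealInnerProductSpace

/-- A cone in a real inner product space: the set `{αv + βw : αβ ≥ 0}` associated to two
noncollinear (linearly independent) vectors `v`, `w`. -/
def IsCone {E : Type*} [NormedAddCommGroup E] [InnerProductSpace ℝ E] (C : Set E) : Prop :=
  ∃ v w : E, LinearIndependent ℝ ![v, w] ∧
    C = {u | ∃ a b : ℝ, 0 ≤ a * b ∧ u = a • v + b • w}

/-- Two cones are `α`-transverse when the unsigned angle between any two nonzero vectors,
one from each cone, lies in `(α, π - α)`. -/
def AreTransverse {E : Type*} [NormedAddCommGroup E] [InnerProductSpace ℝ E]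
    (Cu Cs : Set E) (α : ℝ) : Prop :=
  ∀ u ∈ Cu, ∀ u' ∈ Cs, u ≠ 0 → u' ≠ 0 →
    α < InnerProductGeometry.angle u u' ∧
      InnerProductGeometry.angle u u' < Real.pi - α

set_option maxHeartbeats 2000000 in
/-- The core hyperbolic estimate: for `α`-transverse cones `C_u`, `C_s` in a
two-dimensional real inner product space, there exists `K₀` depending only on `α` such
that for `K > K₀`, the relations `x_u + x_s = w_u + w_s`, `‖w_u‖ ≥ K‖x_u‖` and
`‖w_s‖ ≤ K⁻¹‖x_s‖`, with `x_u, w_u ∈ C_u` and `x_s, w_s ∈ C_s`, force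
`x_u = 0` and `x_s = 0`. -/
theorem cone_hyperbolic_estimate (α : ℝ) (hα : 0 < α) :
    ∃ K₀ : ℝ, ∀ (E : Type) [NormedAddCommGroup E] [InnerProductSpace ℝ E],
      Module.finrank ℝ E = 2 →
      ∀ Cu Cs : Set E, IsCone Cu → IsCone Cs → AreTransverse Cu Cs α →
      ∀ K : ℝ, K₀ < K →
      ∀ xu wu xs ws : E, xu ∈ Cu → wu ∈ Cu → xs ∈ Cs → ws ∈ Cs →
        xu + xs = wu + ws → K * ‖xu‖ ≤ ‖wu‖ → ‖ws‖ ≤ K⁻¹ * ‖xs‖ →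
        xu = 0 ∧ xs = 0 := by
  refine ⟨4 / (1 - Real.cos α), ?_⟩
  intro E _ _ _hdim Cu Cs hCu hCs htrans K hK xu wu xs ws hxu hwu hxs hws heq hKu hKs
  obtain ⟨v, w, hvw, hCuEq⟩ := hCu
  obtain ⟨v', w', hvw', hCsEq⟩ := hCs
  have hv0 : v ≠ 0 := by simpa using hvw.ne_zero 0
  have hv'0 : v' ≠ 0 := by simpa using hvw'.ne_zero 0
  have hvC : v ∈ Cu := by
    rw [hCuEq]; exact ⟨1, 0, by norm_num, by simp⟩
  have hv'C : v' ∈ Cs := by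
    rw [hCsEq]; exact ⟨1, 0, by norm_num, by simp⟩
  obtain ⟨ht1, ht2⟩ := htrans v hvC v' hv'C hv0 hv'0
  have hαπ : α < Real.pi / 2 := by linarith
  set c := Real.cos α with hc
  have hc0 : 0 < c := Real.cos_pos_of_mem_Ioo ⟨by linarith, hαπ⟩
  have hc1 : c < 1 := by
    have : Real.cos α < Real.cos 0 :=
      Real.cos_lt_cos_of_nonneg_of_le_pi le_rfl (by linarith [Real.pi_pos]) hα
    simpa using this
  have hK4 : 4 < K * (1 - c) := by
    rw [div_lt_iff₀ (by linarith)] at hK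
    linarith
  have hK1 : 1 < K := by nlinarith
  have hKpos : 0 < K := by linarith
  -- the basic inner product estimate from transversality
  have hinner : ∀ u ∈ Cu, ∀ u' ∈ Cs, |((inner ℝ u u' : ℝ))| ≤ c * (‖u‖ * ‖u'‖) := by
    intro u hu u' hu'
    rcases eq_or_ne u 0 with rfl | hu0
    · simp
    rcases eq_or_ne u' 0 with rfl | hu'0
    · simp
    obtain ⟨ha1, ha2⟩ := htrans u hu u' hu' hu0 hu'0
    have hcosu : Real.cos (angle u u') < c :=
      Real.cos_lt_cos_of_nonneg_of_le_pi hα.le (angle_le_pi u u') ha1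
    have hcosl : -c < Real.cos (angle u u') := by
      have := Real.cos_lt_cos_of_nonneg_of_le_pi (angle_nonneg u u') (by linarith) ha2
      rw [Real.cos_pi_sub] at this
      linarith
    have hcos : |Real.cos (angle u u')| ≤ c := by
      rw [abs_le]; constructor <;> linarith
    have hnorm : 0 < ‖u‖ * ‖u'‖ :=
      mul_pos (norm_pos_iff.mpr hu0) (norm_pos_iff.mpr hu'0)
    have hca : Real.cos (angle u u') = (inner ℝ u u' : ℝ) / (‖u‖ * ‖u'‖) := cos_angle u u'
    have : |((inner ℝ u u' : ℝ))| / (‖u‖ * ‖u'‖) ≤ c := by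
      rw [← abs_of_pos hnorm, ← abs_div, ← hca]
      simpa [abs_of_pos hnorm] using hcos
    calc |((inner ℝ u u' : ℝ))| = |((inner ℝ u u' : ℝ))| / (‖u‖ * ‖u'‖) * (‖u‖ * ‖u'‖) := by
          field_simp
      _ ≤ c * (‖u‖ * ‖u'‖) := by
          exact mul_le_mul_of_nonneg_right this hnorm.le
  have hdiff : wu - xu = xs - ws := by
    rw [sub_eq_sub_iff_add_eq_add, ← heq]; abel
  -- upper bound on ‖wu - xu‖²
  have key : ‖wu - xu‖ * ‖wu - xu‖ ≤ c * ((‖wu‖ + ‖xu‖) * (‖xs‖ + ‖ws‖)) := by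
    have h1 := abs_le.mp (hinner wu hwu xs hxs)
    have h2 := abs_le.mp (hinner wu hwu ws hws)
    have h3 := abs_le.mp (hinner xu hxu xs hxs)
    have h4 := abs_le.mp (hinner xu hxu ws hws)
    have expand : ‖wu - xu‖ * ‖wu - xu‖
        = (inner ℝ wu xs : ℝ) - (inner ℝ wu ws : ℝ) - (inner ℝ xu xs : ℝ) + (inner ℝ xu ws : ℝ) := by
      rw [← real_inner_self_eq_norm_mul_norm]
      nth_rewrite 2 [hdiff]
      rw [inner_sub_left, inner_sub_right, inner_sub_right]
      ring
    rw [expand]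
    nlinarith [h1.1, h1.2, h2.1, h2.2, h3.1, h3.2, h4.1, h4.2]
  by_cases hwu0 : wu = 0
  · subst hwu0
    have hxu0 : ‖xu‖ = 0 := by
      simp only [norm_zero] at hKu
      have h0 := norm_nonneg xu
      nlinarith
    have hxu0' : xu = 0 := norm_eq_zero.mp hxu0
    subst hxu0'
    have hxsws : xs = ws := by simpa using heq
    subst hxsws
    have : ‖xs‖ = 0 := by
      have hKi : K⁻¹ < 1 := by
        rw [inv_lt_one_iff₀]; right; exact hK1
      have h0 := norm_nonneg xs
      have h1 : (1 - K⁻¹) * ‖xs‖ ≤ 0 := by nlinarith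
      nlinarith
    exact ⟨rfl, norm_eq_zero.mp this⟩
  by_cases hxs0 : xs = 0
  · subst hxs0
    have hws0 : ws = 0 := by
      have : ‖ws‖ ≤ 0 := by simpa using hKs
      exact norm_eq_zero.mp (le_antisymm this (norm_nonneg ws))
    subst hws0
    have hxuwu : xu = wu := by simpa using heq
    have : ‖xu‖ = 0 := by
      rw [hxuwu] at hKu ⊢
      have h0 := norm_nonneg wu
      have h1 : (K - 1) * ‖wu‖ ≤ 0 := by nlinarith
      nlinarith
    exact absurd (hxuwu.symm.trans (norm_eq_zero.mp this)) hwu0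
  -- main case: contradiction
  exfalso
  set a := ‖wu‖ with ha'
  set b := ‖xs‖ with hb'
  set p := ‖xu‖ with hp'
  set q := ‖ws‖ with hq'
  have ha : 0 < a := norm_pos_iff.mpr hwu0
  have hb : 0 < b := norm_pos_iff.mpr hxs0
  have hp0 : 0 ≤ p := norm_nonneg xu
  have hq0 : 0 ≤ q := norm_nonneg ws
  have hKp : K * p ≤ a := hKu
  have hKq : K * q ≤ b := by
    rw [← le_div_iff₀' hKpos, div_eq_inv_mul] at *
    exact hKs
  -- lower bound on ‖wu - xu‖²
  have low : (a - p) * (b - q) ≤ ‖wu - xu‖ * ‖wu - xu‖ := by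
    have l1 : a - p ≤ ‖wu - xu‖ := by
      have := norm_sub_norm_le wu xu; linarith
    have l2 : b - q ≤ ‖xs - ws‖ := by
      have := norm_sub_norm_le xs ws; linarith
    have hap : 0 ≤ a - p := by nlinarith
    have hbq : 0 ≤ b - q := by nlinarith
    calc (a - p) * (b - q) ≤ ‖wu - xu‖ * ‖xs - ws‖ :=
          mul_le_mul l1 l2 hbq (le_trans hap l1)
      _ = ‖wu - xu‖ * ‖wu - xu‖ := by rw [← hdiff]
  have main : (a - p) * (b - q) ≤ c * ((a + p) * (b + q)) := le_trans low key
  -- rescale by K² and compare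
  have e1 : (K - 1) * a ≤ K * a - K * p := by nlinarith
  have e2 : (K - 1) * b ≤ K * b - K * q := by nlinarith
  have e1' : 0 ≤ (K - 1) * a := by nlinarith
  have e2' : 0 ≤ (K - 1) * b := by nlinarith
  have e3 : ((K - 1) * a) * ((K - 1) * b) ≤ (K * a - K * p) * (K * b - K * q) :=
    mul_le_mul e1 e2 e2' (le_trans e1' e1)
  have e5 : K * a + K * p ≤ (K + 1) * a := by nlinarith
  have e6 : K * b + K * q ≤ (K + 1) * b := by nlinarith
  have e7 : (K * a + K * p) * (K * b + K * q) ≤ ((K + 1) * a) * ((K + 1) * b) :=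
    mul_le_mul e5 e6 (by nlinarith) (by nlinarith)
  have final : (K - 1) ^ 2 * (a * b) ≤ c * ((K + 1) ^ 2 * (a * b)) := by
    have h1 : ((K - 1) * a) * ((K - 1) * b) ≤ K ^ 2 * ((a - p) * (b - q)) := by
      nlinarith [e3]
    have h2 : K ^ 2 * (c * ((a + p) * (b + q))) ≤ c * (((K + 1) * a) * ((K + 1) * b)) := by
      nlinarith [e7, hc0.le]
    have h3 : K ^ 2 * ((a - p) * (b - q)) ≤ K ^ 2 * (c * ((a + p) * (b + q))) :=
      mul_le_mul_of_nonneg_left main (by positivity)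
    nlinarith [h1, h2, h3]
  have hratio : (K - 1) ^ 2 ≤ c * (K + 1) ^ 2 := by
    have hab : 0 < a * b := mul_pos ha hb
    nlinarith [final, hab]
  nlinarith [hK4, hratio, hc0, hc1, hKpos]
end
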